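/- Existence of the mixing energies: Let 𝔄₁ = {O, diag(−1/2,1), diag(−2,2)} and 𝔄₂ = {O, diag(5/2,1), diag(3,2)} (with O = diag(0,0)) and fix p ≥ 2. Then there exist polyconvex functions W₁, W₂ : M^{2×2} → [0, ∞) and constants c₁, c₂, c₃ > 0 such that c₁‖Λ‖^p − c₂ ≤ W_k(Λ) ≤ c₃(1 + ‖Λ‖^p) for all Λ ∈ M^{2×2} and k = 1, 2, with W₁⁻¹(0) = 𝔄₁ and W₂⁻¹(0) = 𝔄₂. -/

import Mathlib

open Matrix

noncomputable section

-- `M^{2×2}` is endowed with the Frobenius norm.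
attribute [local instance] Matrix.frobeniusNormedAddCommGroup Matrix.frobeniusNormedSpace

/-- A function `W : M^{2×2} → ℝ` is polyconvex if there is a convex function
`V : M^{2×2} × ℝ → ℝ` such that `W Λ = V (Λ, det Λ)` for all `Λ`. -/
def IsPolyconvexFun (W : Matrix (Fin 2) (Fin 2) ℝ → ℝ) : Prop :=
  ∃ V : Matrix (Fin 2) (Fin 2) ℝ × ℝ → ℝ, ConvexOn ℝ Set.univ V ∧
    ∀ Λ : Matrix (Fin 2) (Fin 2) ℝ, W Λ = V (Λ, Λ.det)

/-- `𝔄₁ = {O, diag(−1/2, 1), diag(−2, 2)}`. -/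
def setA₁ : Set (Matrix (Fin 2) (Fin 2) ℝ) :=
  {0, Matrix.diagonal ![-(1 : ℝ)/2, 1], Matrix.diagonal ![(-2 : ℝ), 2]}

/-- `𝔄₂ = {O, diag(5/2, 1), diag(3, 2)}`. -/
def setA₂ : Set (Matrix (Fin 2) (Fin 2) ℝ) :=
  {0, Matrix.diagonal ![(5 : ℝ)/2, 1], Matrix.diagonal ![(3 : ℝ), 2]}

namespace MixingAux

local notation "Mat" => Matrix (Fin 2) (Fin 2) ℝ

/-- Distance to a convex set is a convex function. -/
lemma convexOn_infDist {E : Type*} [NormedAddCommGroup E] [NormedSpace ℝ E]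
    {T : Set E} (hne : T.Nonempty) (hT : Convex ℝ T) :
    ConvexOn ℝ Set.univ fun x => Metric.infDist x T := by
  refine ⟨convex_univ, fun x _ y _ a b ha hb hab => ?_⟩
  simp only [smul_eq_mul]
  refine le_of_forall_pos_le_add fun ε hε => ?_
  obtain ⟨u, huT, hu⟩ := (Metric.infDist_lt_iff hne).1
    (lt_add_of_pos_right (Metric.infDist x T) hε)
  obtain ⟨v, hvT, hv⟩ := (Metric.infDist_lt_iff hne).1
    (lt_add_of_pos_right (Metric.infDist y T) hε)
  have hmem : a • u + b • v ∈ T := hT huT hvT ha hb hab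
  have hkey : a • x + b • y - (a • u + b • v) = a • (x - u) + b • (y - v) := by module
  calc Metric.infDist (a • x + b • y) T ≤ dist (a • x + b • y) (a • u + b • v) :=
        Metric.infDist_le_dist_of_mem hmem
    _ ≤ a * dist x u + b * dist y v := by
        rw [dist_eq_norm, dist_eq_norm, dist_eq_norm, hkey]
        calc ‖a • (x - u) + b • (y - v)‖ ≤ ‖a • (x - u)‖ + ‖b • (y - v)‖ := norm_add_le _ _
          _ = a * ‖x - u‖ + b * ‖y - v‖ := by
              rw [norm_smul, norm_smul, Real.norm_of_nonneg ha, Real.norm_of_nonneg hb]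
    _ ≤ a * (Metric.infDist x T + ε) + b * (Metric.infDist y T + ε) :=
        add_le_add (mul_le_mul_of_nonneg_left hu.le ha) (mul_le_mul_of_nonneg_left hv.le hb)
    _ = a * Metric.infDist x T + b * Metric.infDist y T + (a + b) * ε := by ring
    _ = a * Metric.infDist x T + b * Metric.infDist y T + ε := by rw [hab, one_mul]

/-- Composition of a nonnegative convex function with a convex monotone function on `[0,∞)`. -/
lemma convexOn_comp_mono {E : Type*} [AddCommGroup E] [Module ℝ E]
    {f : E → ℝ} (hf : ConvexOn ℝ Set.univ f) (hf0 : ∀ x, 0 ≤ f x)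
    {g : ℝ → ℝ} (hg : ConvexOn ℝ (Set.Ici 0) g) (hg' : MonotoneOn g (Set.Ici 0)) :
    ConvexOn ℝ Set.univ fun x => g (f x) := by
  refine ⟨convex_univ, fun x _ y _ a b ha hb hab => ?_⟩
  have h1 : f (a • x + b • y) ≤ a * f x + b * f y := by
    simpa using hf.2 (Set.mem_univ x) (Set.mem_univ y) ha hb hab
  have h2 : (0:ℝ) ≤ a * f x + b * f y :=
    add_nonneg (mul_nonneg ha (hf0 x)) (mul_nonneg hb (hf0 y))
  calc g (f (a • x + b • y)) ≤ g (a * f x + b * f y) := hg' (Set.mem_Ici.2 (hf0 _)) h2 h1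
    _ ≤ a • g (f x) + b • g (f y) := by
        simpa using hg.2 (Set.mem_Ici.2 (hf0 x)) (Set.mem_Ici.2 (hf0 y)) ha hb hab

/-- The squared Frobenius norm of a 2×2 matrix is the sum of squares of entries. -/
lemma frob_sq (Λ : Mat) :
    ‖Λ‖ ^ (2:ℕ) = (Λ 0 0)^2 + (Λ 0 1)^2 + (Λ 1 0)^2 + (Λ 1 1)^2 := by
  have h := Matrix.frobenius_norm_def Λ
  rw [Fin.sum_univ_two, Fin.sum_univ_two, Fin.sum_univ_two] at h
  simp only [Real.rpow_two, Real.norm_eq_abs, sq_abs] at h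
  have hnn : (0:ℝ) ≤ (Λ 0 0)^2 + (Λ 0 1)^2 + ((Λ 1 0)^2 + (Λ 1 1)^2) := by positivity
  rw [h, ← Real.rpow_natCast (((Λ 0 0)^2 + (Λ 0 1)^2 + ((Λ 1 0)^2 + (Λ 1 1)^2)) ^ (1/2 : ℝ)) 2,
    ← Real.rpow_mul hnn]
  norm_num
  ring

lemma abs_det_le (Λ : Mat) : |Λ.det| ≤ ‖Λ‖ ^ (2:ℕ) := by
  rw [frob_sq, Matrix.det_fin_two]
  rw [abs_le]
  constructor <;> nlinarith [sq_nonneg (Λ 0 0 - Λ 1 1), sq_nonneg (Λ 0 0 + Λ 1 1),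
    sq_nonneg (Λ 0 1 - Λ 1 0), sq_nonneg (Λ 0 1 + Λ 1 0)]

lemma norm_le_of_sq {Λ : Mat} {c : ℝ} (hc : 0 ≤ c)
    (h : (Λ 0 0)^2 + (Λ 0 1)^2 + (Λ 1 0)^2 + (Λ 1 1)^2 ≤ c ^ 2) : ‖Λ‖ ≤ c := by
  have h2 : ‖Λ‖ ^ (2:ℕ) ≤ c ^ 2 := by rw [frob_sq]; exact h
  nlinarith [norm_nonneg Λ]

/-- The main builder lemma. -/
lemma build (p : ℝ) (hp : 2 ≤ p) (A B : Mat) (hA : ‖A‖ ≤ 4) (hB : ‖B‖ ≤ 4)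
    (key : ∀ s t : ℝ, 0 ≤ s → 0 ≤ t → s + t ≤ 1 →
      (s • A + t • B).det = s * A.det + t * B.det →
      (s = 0 ∧ t = 0) ∨ (s = 1 ∧ t = 0) ∨ (s = 0 ∧ t = 1)) :
    ∃ W : Mat → ℝ, IsPolyconvexFun W ∧ (∀ Λ, 0 ≤ W Λ) ∧
      (∀ Λ, (1/2:ℝ)^p * ‖Λ‖ ^ p - 4^p ≤ W Λ ∧ W Λ ≤ 3 * (1 + ‖Λ‖ ^ p)) ∧
      W ⁻¹' {0} = {0, A, B} := by
  have hp1 : (1:ℝ) ≤ p := by linarith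
  have hp0 : (0:ℝ) ≤ p := by linarith
  set S : Set (ℝ × ℝ) := {q | 0 ≤ q.1 ∧ 0 ≤ q.2 ∧ q.1 + q.2 ≤ 1} with hS
  have hSconv : Convex ℝ S := by
    rintro x ⟨hx1, hx2, hx3⟩ y ⟨hy1, hy2, hy3⟩ a b ha hb hab
    refine ⟨?_, ?_, ?_⟩
    · show (0:ℝ) ≤ a * x.1 + b * y.1
      positivity
    · show (0:ℝ) ≤ a * x.2 + b * y.2
      positivity
    · show a * x.1 + b * y.1 + (a * x.2 + b * y.2) ≤ 1
      nlinarith [mul_le_mul_of_nonneg_left hx3 ha, mul_le_mul_of_nonneg_left hy3 hb]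
  have hSclosed : IsClosed S := by
    have : S = {q : ℝ × ℝ | 0 ≤ q.1} ∩ ({q | 0 ≤ q.2} ∩ {q | q.1 + q.2 ≤ 1}) := rfl
    rw [this]
    exact (isClosed_le continuous_const continuous_fst).inter
      ((isClosed_le continuous_const continuous_snd).inter
        (isClosed_le (continuous_fst.add continuous_snd) continuous_const))
  have hScompact : IsCompact S := by
    refine IsCompact.of_isClosed_subset ((isCompact_Icc (a := (0:ℝ)) (b := 1)).prod (isCompact_Icc (a := (0:ℝ)) (b := 1))) hSclosed ?_
    rintro q ⟨h1, h2, h3⟩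
    exact ⟨⟨h1, by linarith⟩, ⟨h2, by linarith⟩⟩
  have hS0 : ((0:ℝ), (0:ℝ)) ∈ S := by constructor <;> norm_num
  -- the lifted triangle
  set T : Set (Mat × ℝ) :=
    (fun q : ℝ × ℝ => q.1 • ((A, A.det) : Mat × ℝ) + q.2 • ((B, B.det) : Mat × ℝ)) '' S with hT
  set TM : Set Mat := (fun q : ℝ × ℝ => q.1 • A + q.2 • B) '' S with hTM
  have hTconv : Convex ℝ T := by
    rintro x ⟨q, hq, rfl⟩ y ⟨r, hr, rfl⟩ a b ha hb hab
    refine ⟨a • q + b • r, hSconv hq hr ha hb hab, ?_⟩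
    simp only [Prod.fst_add, Prod.snd_add, Prod.smul_fst, Prod.smul_snd, smul_eq_mul]
    module
  have hTMconv : Convex ℝ TM := by
    rintro x ⟨q, hq, rfl⟩ y ⟨r, hr, rfl⟩ a b ha hb hab
    refine ⟨a • q + b • r, hSconv hq hr ha hb hab, ?_⟩
    simp only [Prod.fst_add, Prod.snd_add, Prod.smul_fst, Prod.smul_snd, smul_eq_mul]
    module
  have hTne : T.Nonempty := ⟨_, ⟨(0,0), hS0, rfl⟩⟩
  have hTMne : TM.Nonempty := ⟨_, ⟨(0,0), hS0, rfl⟩⟩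
  have hTclosed : IsClosed T := by
    refine (hScompact.image ?_).isClosed
    exact (continuous_fst.smul continuous_const).add (continuous_snd.smul continuous_const)
  have hT0 : ((0 : Mat), (0:ℝ)) ∈ T := ⟨(0,0), hS0, by simp; rfl⟩
  have hTM0 : (0 : Mat) ∈ TM := ⟨(0,0), hS0, by simp⟩
  -- norms of elements of TM are at most 4
  have hTMnorm : ∀ y ∈ TM, ‖y‖ ≤ 4 := by
    rintro y ⟨q, ⟨h1, h2, h3⟩, rfl⟩
    calc ‖q.1 • A + q.2 • B‖ ≤ ‖q.1 • A‖ + ‖q.2 • B‖ := norm_add_le _ _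
      _ = q.1 * ‖A‖ + q.2 * ‖B‖ := by
          rw [norm_smul, norm_smul, Real.norm_of_nonneg h1, Real.norm_of_nonneg h2]
      _ ≤ q.1 * 4 + q.2 * 4 := add_le_add (mul_le_mul_of_nonneg_left hA h1)
          (mul_le_mul_of_nonneg_left hB h2)
      _ ≤ 4 := by linarith
  set V : Mat × ℝ → ℝ :=
    fun x => Metric.infDist x T + (Metric.infDist x.1 TM) ^ p with hV
  set W : Mat → ℝ := fun Λ => V (Λ, Λ.det) with hW
  have hVconv : ConvexOn ℝ Set.univ V := by
    refine ConvexOn.add (convexOn_infDist hTne hTconv) ?_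
    have hbase : ConvexOn ℝ Set.univ fun x : Mat × ℝ => Metric.infDist x.1 TM := by
      refine ⟨convex_univ, fun x _ y _ a b ha hb hab => ?_⟩
      have := (convexOn_infDist hTMne hTMconv).2 (Set.mem_univ x.1) (Set.mem_univ y.1)
        ha hb hab
      simpa using this
    exact convexOn_comp_mono hbase (fun x => Metric.infDist_nonneg) (convexOn_rpow hp1)
      (fun x hx y hy hxy => Real.rpow_le_rpow hx hxy hp0)
  have hWnonneg : ∀ Λ, 0 ≤ W Λ := fun Λ =>
    add_nonneg Metric.infDist_nonneg (Real.rpow_nonneg Metric.infDist_nonneg p)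
  -- growth estimates
  have hgrowth : ∀ Λ : Mat, (1/2:ℝ)^p * ‖Λ‖ ^ p - 4^p ≤ W Λ ∧ W Λ ≤ 3 * (1 + ‖Λ‖ ^ p) := by
    intro Λ
    have hn : (0:ℝ) ≤ ‖Λ‖ := norm_nonneg Λ
    have hrnn : (0:ℝ) ≤ ‖Λ‖ ^ p := Real.rpow_nonneg hn p
    constructor
    · -- lower bound
      have hld : ‖Λ‖ - 4 ≤ Metric.infDist Λ TM := by
        by_contra hcon
        push_neg at hcon
        obtain ⟨y, hy, hdy⟩ := (Metric.infDist_lt_iff hTMne).1 hcon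
        have h1 : ‖Λ‖ - ‖y‖ ≤ dist Λ y := by
          rw [dist_eq_norm]
          have := norm_sub_norm_le Λ y
          linarith [this]
        have := hTMnorm y hy
        linarith
      rcases le_or_gt ‖Λ‖ 8 with hc | hc
      · have h1 : (1/2:ℝ)^p * ‖Λ‖ ^ p = ((1/2) * ‖Λ‖) ^ p :=
          (Real.mul_rpow (by norm_num) hn).symm
        have h2 : ((1/2:ℝ) * ‖Λ‖) ^ p ≤ 4 ^ p :=
          Real.rpow_le_rpow (by positivity) (by linarith) hp0
        have h3 := hWnonneg Λ
        rw [h1]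
        exact le_trans (sub_nonpos.2 h2) h3
      · have hpos : (0:ℝ) ≤ (1/2) * ‖Λ‖ := by positivity
        have h1 : ((1/2:ℝ) * ‖Λ‖) ^ p ≤ (Metric.infDist Λ TM) ^ p :=
          Real.rpow_le_rpow hpos (by linarith) hp0
        have h2 : (1/2:ℝ)^p * ‖Λ‖ ^ p = ((1/2) * ‖Λ‖) ^ p :=
          (Real.mul_rpow (by norm_num) hn).symm
        have h4 : (0:ℝ) < 4 ^ p := Real.rpow_pos_of_pos (by norm_num) p
        have h5 : Metric.infDist (Λ, Λ.det) T ≥ 0 := Metric.infDist_nonneg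
        have : W Λ ≥ (Metric.infDist Λ TM) ^ p := by
          simp only [hW, hV]
          linarith [h5]
        linarith [h1, h2 ▸ h1]
    · -- upper bound
      have hone : ‖Λ‖ ≤ 1 + ‖Λ‖ ^ p := by
        rcases le_or_gt ‖Λ‖ 1 with h | h
        · linarith
        · calc ‖Λ‖ = ‖Λ‖ ^ (1:ℝ) := (Real.rpow_one _).symm
            _ ≤ ‖Λ‖ ^ p := Real.rpow_le_rpow_of_exponent_le h.le hp1
            _ ≤ 1 + ‖Λ‖ ^ p := by linarith
      have hsq : ‖Λ‖ ^ (2:ℕ) ≤ 1 + ‖Λ‖ ^ p := by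
        rcases le_or_gt ‖Λ‖ 1 with h | h
        · nlinarith
        · calc ‖Λ‖ ^ (2:ℕ) = ‖Λ‖ ^ (2:ℝ) := (Real.rpow_two _).symm
            _ ≤ ‖Λ‖ ^ p := Real.rpow_le_rpow_of_exponent_le h.le hp
            _ ≤ 1 + ‖Λ‖ ^ p := by linarith
      have hd1 : Metric.infDist (Λ, Λ.det) T ≤ ‖Λ‖ + ‖Λ‖ ^ (2:ℕ) := by
        have h1 : Metric.infDist (Λ, Λ.det) T ≤ dist (Λ, Λ.det) ((0 : Mat), (0:ℝ)) :=
          Metric.infDist_le_dist_of_mem hT0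
        have h2 : dist (Λ, Λ.det) ((0 : Mat), (0:ℝ)) = max ‖Λ‖ |Λ.det| := by
          rw [dist_eq_norm]
          have : ((Λ, Λ.det) : Mat × ℝ) - ((0:Mat), (0:ℝ)) = (Λ, Λ.det) := by simp
          rw [this, Prod.norm_def]
          simp [Real.norm_eq_abs]
        have h3 : max ‖Λ‖ |Λ.det| ≤ ‖Λ‖ + ‖Λ‖ ^ (2:ℕ) := by
          refine max_le (le_add_of_nonneg_right (by positivity)) ?_
          have := abs_det_le Λ
          linarith
        linarith [h1, h2]
      have hd2 : (Metric.infDist Λ TM) ^ p ≤ ‖Λ‖ ^ p := by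
        refine Real.rpow_le_rpow Metric.infDist_nonneg ?_ hp0
        have h1 : Metric.infDist Λ TM ≤ dist Λ (0 : Mat) := Metric.infDist_le_dist_of_mem hTM0
        simpa using h1
      have : W Λ = Metric.infDist (Λ, Λ.det) T + (Metric.infDist Λ TM) ^ p := rfl
      rw [this]
      linarith
  refine ⟨W, ⟨V, hVconv, fun Λ => rfl⟩, hWnonneg, hgrowth, ?_⟩
  -- zero set
  ext Λ
  simp only [Set.mem_preimage, Set.mem_singleton_iff, Set.mem_insert_iff]
  constructor
  · intro h0
    have h1 : Metric.infDist (Λ, Λ.det) T = 0 := by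
      have ha := Metric.infDist_nonneg (x := ((Λ, Λ.det) : Mat × ℝ)) (s := T)
      have hb : (0:ℝ) ≤ (Metric.infDist Λ TM) ^ p := Real.rpow_nonneg Metric.infDist_nonneg p
      have : Metric.infDist (Λ, Λ.det) T + (Metric.infDist Λ TM) ^ p = 0 := h0
      linarith
    have hm : ((Λ, Λ.det) : Mat × ℝ) ∈ T := (hTclosed.mem_iff_infDist_zero hTne).2 h1
    obtain ⟨q, ⟨hq1, hq2, hq3⟩, hq⟩ := hm
    have hfst : q.1 • A + q.2 • B = Λ := congrArg Prod.fst hq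
    have hsnd : q.1 * A.det + q.2 * B.det = Λ.det := by
      have := congrArg Prod.snd hq
      simpa [smul_eq_mul] using this
    have hdet : (q.1 • A + q.2 • B).det = q.1 * A.det + q.2 * B.det := by
      rw [hfst, hsnd]
    rcases key q.1 q.2 hq1 hq2 hq3 hdet with ⟨e1, e2⟩ | ⟨e1, e2⟩ | ⟨e1, e2⟩
    · left; rw [← hfst, e1, e2]; simp
    · right; left; rw [← hfst, e1, e2]; simp
    · right; right; rw [← hfst, e1, e2]; simp
  · intro h
    have hzero : ∀ x : Mat, (x, x.det) ∈ T → x ∈ TM → W x = 0 := by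
      intro x hxT hxTM
      have h1 : Metric.infDist (x, x.det) T = 0 := Metric.infDist_zero_of_mem hxT
      have h2 : Metric.infDist x TM = 0 := Metric.infDist_zero_of_mem hxTM
      show Metric.infDist (x, x.det) T + (Metric.infDist x TM) ^ p = 0
      rw [h1, h2, Real.zero_rpow (by linarith), add_zero]
    rcases h with h | h | h
    · rw [h]; exact hzero 0 (by simpa using hT0) hTM0
    · rw [h]
      exact hzero A ⟨(1,0), by constructor <;> norm_num, by simp⟩
        ⟨(1,0), by constructor <;> norm_num, by simp⟩
    · rw [h]
      exact hzero B ⟨(0,1), by constructor <;> norm_num, by simp⟩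
        ⟨(0,1), by constructor <;> norm_num, by simp⟩

end MixingAux

/-- **Existence of the mixing energies.**
For `𝔄₁ = {O, diag(−1/2,1), diag(−2,2)}`, `𝔄₂ = {O, diag(5/2,1), diag(3,2)}` and any fixed
`p ≥ 2`, there exist nonnegative polyconvex functions `W₁, W₂` and constants
`c₁, c₂, c₃ > 0` with `c₁‖Λ‖^p − c₂ ≤ W_k(Λ) ≤ c₃(1 + ‖Λ‖^p)` for all `Λ` and `k = 1, 2`,
`W₁⁻¹(0) = 𝔄₁` and `W₂⁻¹(0) = 𝔄₂`. -/
theorem exists_mixing_energies (p : ℝ) (hp : 2 ≤ p) :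
    ∃ (W₁ W₂ : Matrix (Fin 2) (Fin 2) ℝ → ℝ) (c₁ c₂ c₃ : ℝ),
      IsPolyconvexFun W₁ ∧ IsPolyconvexFun W₂ ∧
      (∀ Λ, 0 ≤ W₁ Λ) ∧ (∀ Λ, 0 ≤ W₂ Λ) ∧
      0 < c₁ ∧ 0 < c₂ ∧ 0 < c₃ ∧
      (∀ Λ : Matrix (Fin 2) (Fin 2) ℝ,
        c₁ * ‖Λ‖ ^ p - c₂ ≤ W₁ Λ ∧ W₁ Λ ≤ c₃ * (1 + ‖Λ‖ ^ p)) ∧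
      (∀ Λ : Matrix (Fin 2) (Fin 2) ℝ,
        c₁ * ‖Λ‖ ^ p - c₂ ≤ W₂ Λ ∧ W₂ Λ ≤ c₃ * (1 + ‖Λ‖ ^ p)) ∧
      W₁ ⁻¹' {0} = setA₁ ∧ W₂ ⁻¹' {0} = setA₂ := by
  -- matrices
  set A₁ : Matrix (Fin 2) (Fin 2) ℝ := Matrix.diagonal ![-(1 : ℝ)/2, 1] with hA₁
  set B₁ : Matrix (Fin 2) (Fin 2) ℝ := Matrix.diagonal ![(-2 : ℝ), 2] with hB₁
  set A₂ : Matrix (Fin 2) (Fin 2) ℝ := Matrix.diagonal ![(5 : ℝ)/2, 1] with hA₂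
  set B₂ : Matrix (Fin 2) (Fin 2) ℝ := Matrix.diagonal ![(3 : ℝ), 2] with hB₂
  have hnA₁ : ‖A₁‖ ≤ 4 := by
    refine MixingAux.norm_le_of_sq (by norm_num) ?_
    simp [hA₁, Matrix.diagonal]
    norm_num
  have hnB₁ : ‖B₁‖ ≤ 4 := by
    refine MixingAux.norm_le_of_sq (by norm_num) ?_
    simp [hB₁, Matrix.diagonal]
    norm_num
  have hnA₂ : ‖A₂‖ ≤ 4 := by
    refine MixingAux.norm_le_of_sq (by norm_num) ?_
    simp [hA₂, Matrix.diagonal]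
    norm_num
  have hnB₂ : ‖B₂‖ ≤ 4 := by
    refine MixingAux.norm_le_of_sq (by norm_num) ?_
    simp [hB₂, Matrix.diagonal]
    norm_num
  have key₁ : ∀ s t : ℝ, 0 ≤ s → 0 ≤ t → s + t ≤ 1 →
      (s • A₁ + t • B₁).det = s * A₁.det + t * B₁.det →
      (s = 0 ∧ t = 0) ∨ (s = 1 ∧ t = 0) ∨ (s = 0 ∧ t = 1) := by
    intro s t hs ht hst hdet
    rw [Matrix.det_fin_two, Matrix.det_fin_two, Matrix.det_fin_two] at hdet
    simp [hA₁, hB₁, Matrix.diagonal, Matrix.add_apply, Matrix.smul_apply] at hdet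
    -- factorization : (s+t-1)*(s/2+4t) = 3/2 * (s*t)
    have hfac : (s + t - 1) * (s/2 + 4*t) = 3/2 * (s * t) := by nlinarith [hdet]
    have hst0 : s * t = 0 := by
      nlinarith [mul_nonneg hs ht,
        mul_nonneg (by linarith : (0:ℝ) ≤ 1 - s - t) (by linarith : (0:ℝ) ≤ s/2 + 4*t)]
    rcases mul_eq_zero.1 hst0 with rfl0 | rfl0
    · -- s = 0
      rw [rfl0] at hfac
      have : (t - 1) * (4 * t) = 0 := by linarith [hfac]
      rcases mul_eq_zero.1 this with h | h
      · right; right; constructor; exact rfl0; linarith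
      · left; constructor; exact rfl0; linarith
    · -- t = 0
      rw [rfl0] at hfac
      have : (s - 1) * (s/2) = 0 := by linarith [hfac]
      rcases mul_eq_zero.1 this with h | h
      · right; left; constructor; linarith; exact rfl0
      · left; constructor; linarith; exact rfl0
  have key₂ : ∀ s t : ℝ, 0 ≤ s → 0 ≤ t → s + t ≤ 1 →
      (s • A₂ + t • B₂).det = s * A₂.det + t * B₂.det →
      (s = 0 ∧ t = 0) ∨ (s = 1 ∧ t = 0) ∨ (s = 0 ∧ t = 1) := by
    intro s t hs ht hst hdet
    rw [Matrix.det_fin_two, Matrix.det_fin_two, Matrix.det_fin_two] at hdet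
    simp [hA₂, hB₂, Matrix.diagonal, Matrix.add_apply, Matrix.smul_apply] at hdet
    -- factorization : (s+t-1)*(5s/2+6t) = 1/2 * (s*t)
    have hfac : (s + t - 1) * (5*s/2 + 6*t) = 1/2 * (s * t) := by nlinarith [hdet]
    have hst0 : s * t = 0 := by
      nlinarith [mul_nonneg hs ht,
        mul_nonneg (by linarith : (0:ℝ) ≤ 1 - s - t) (by linarith : (0:ℝ) ≤ 5*s/2 + 6*t)]
    rcases mul_eq_zero.1 hst0 with rfl0 | rfl0
    · rw [rfl0] at hfac
      have : (t - 1) * (6 * t) = 0 := by linarith [hfac]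
      rcases mul_eq_zero.1 this with h | h
      · right; right; constructor; exact rfl0; linarith
      · left; constructor; exact rfl0; linarith
    · rw [rfl0] at hfac
      have : (s - 1) * (5*s/2) = 0 := by linarith [hfac]
      rcases mul_eq_zero.1 this with h | h
      · right; left; constructor; linarith; exact rfl0
      · left; constructor; linarith; exact rfl0
  obtain ⟨W₁, hpc₁, hnn₁, hgr₁, hz₁⟩ := MixingAux.build p hp A₁ B₁ hnA₁ hnB₁ key₁
  obtain ⟨W₂, hpc₂, hnn₂, hgr₂, hz₂⟩ := MixingAux.build p hp A₂ B₂ hnA₂ hnB₂ key₂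
  refine ⟨W₁, W₂, (1/2:ℝ)^p, 4^p, 3, hpc₁, hpc₂, hnn₁, hnn₂,
    Real.rpow_pos_of_pos (by norm_num) p, Real.rpow_pos_of_pos (by norm_num) p,
    by norm_num, hgr₁, hgr₂, ?_, ?_⟩
  · rw [hz₁]; rfl
  · rw [hz₂]; rfl

end
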